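/- arXiv:2306.07219 — 4 statements merged into one kernel-verified Lean document; each statement's English description precedes it below -/
import Mathlib

section
/- If Y₁ ~ Poisson(λ) and Y₂ ~ TGD(q, α) are independent, then for all y ∈ ℕ, P(Y₁ + Y₂ = y) = (1-α)(1-q)q^y e^{-λ} ∑_{i=0}^y (λ/q)^i / i! + α(1-q²)q^{2y} e^{-λ} ∑_{i=0}^y (λ/q²)^i / i!. -/
open scoped BigOperators
open Real Filter

noncomputable def tgdPmf (q a : ℝ) (y : ℕ) : ℝ :=
  (1 - a) * q ^ y * (1 - q) + a * (1 - q ^ 2) * q ^ (2 * y)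

noncomputable def poiTGPmf (lam q a : ℝ) (y : ℕ) : ℝ :=
  (1 - a) * (1 - q) * q ^ y * Real.exp (-lam) *
      ∑ i ∈ Finset.range (y + 1), (lam / q) ^ i / (Nat.factorial i : ℝ)
  + a * (1 - q ^ 2) * q ^ (2 * y) * Real.exp (-lam) *
      ∑ i ∈ Finset.range (y + 1), (lam / q ^ 2) ^ i / (Nat.factorial i : ℝ)

/-! The two-component geometric pmf is a mixture of the geometric sequences `q ^ n` and
`(q ^ 2) ^ n`, and convolving any sequence `f` with `r ^ n` factors as
`r ^ y * ∑ f i / r ^ i`; for the Poisson weights this last sum is a truncated exponential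
series in `λ / r`. -/

theorem Finset.sum_range_succ_mul_pow_sub {K : Type*} [Field K] (f : ℕ → K) {r : K}
    (hr : r ≠ 0) (y : ℕ) :
    ∑ i ∈ Finset.range (y + 1), f i * r ^ (y - i) =
      r ^ y * ∑ i ∈ Finset.range (y + 1), f i / r ^ i := by
  rw [Finset.mul_sum]
  refine Finset.sum_congr rfl fun i hi => ?_
  rw [pow_sub₀ r hr (Nat.lt_succ_iff.mp (Finset.mem_range.mp hi))]
  ring

theorem sum_poisson_mul_pow_sub (lam : ℝ) {r : ℝ} (hr : r ≠ 0) (y : ℕ) :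
    ∑ i ∈ Finset.range (y + 1),
        Real.exp (-lam) * lam ^ i / (Nat.factorial i : ℝ) * r ^ (y - i) =
      r ^ y * Real.exp (-lam) *
        ∑ i ∈ Finset.range (y + 1), (lam / r) ^ i / (Nat.factorial i : ℝ) := by
  rw [Finset.sum_range_succ_mul_pow_sub _ hr, Finset.mul_sum, Finset.mul_sum]
  refine Finset.sum_congr rfl fun i _ => ?_
  rw [div_pow]
  ring

theorem tgdPmf_eq_mix_geom (q a : ℝ) (n : ℕ) :
    tgdPmf q a n = (1 - a) * (1 - q) * q ^ n + a * (1 - q ^ 2) * (q ^ 2) ^ n := by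
  rw [tgdPmf, ← pow_mul]
  ring

theorem poiTG_convolution_general (lam q a : ℝ) (hq0 : 0 < q) (y : ℕ) :
    (∑ i ∈ Finset.range (y + 1),
        (Real.exp (-lam) * lam ^ i / (Nat.factorial i : ℝ)) * tgdPmf q a (y - i)) =
      poiTGPmf lam q a y := by
  set poisson : ℕ → ℝ := fun i => Real.exp (-lam) * lam ^ i / (Nat.factorial i : ℝ)
  calc ∑ i ∈ Finset.range (y + 1), poisson i * tgdPmf q a (y - i)
      = (1 - a) * (1 - q) * ∑ i ∈ Finset.range (y + 1), poisson i * q ^ (y - i)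
          + a * (1 - q ^ 2) * ∑ i ∈ Finset.range (y + 1), poisson i * (q ^ 2) ^ (y - i) := by
        simp only [tgdPmf_eq_mix_geom, Finset.mul_sum, ← Finset.sum_add_distrib]
        exact Finset.sum_congr rfl fun i _ => by ring
    _ = poiTGPmf lam q a y := by
        rw [sum_poisson_mul_pow_sub lam hq0.ne', sum_poisson_mul_pow_sub lam (pow_ne_zero 2 hq0.ne'),
          poiTGPmf, ← pow_mul]
        ring

theorem poiTG_convolution (lam q a : ℝ) (hlam : 0 < lam) (hq0 : 0 < q) (hq1 : q < 1)
    (ha0 : 0 < a) (ha1 : a < 1) (y : ℕ) :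
    (∑ i ∈ Finset.range (y + 1),
        (Real.exp (-lam) * lam ^ i / (Nat.factorial i : ℝ)) * tgdPmf q a (y - i)) =
      poiTGPmf lam q a y :=
  poiTG_convolution_general lam q a hq0 y
end

section
/- The PoiTG pmf is a valid probability mass function: for λ > 0, 0 < q < 1, 0 < α < 1, the function p(y) = (1-α)(1-q)q^y e^{-λ} ∑_{i=0}^y (λ/q)^i/i! + α(1-q²)q^{2y} e^{-λ} ∑_{i=0}^y (λ/q²)^i/i! is nonnegative and sums to 1 over y ∈ ℕ. -/
open scoped BigOperators
open Real Filter

/-!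
`poiGeomPmf lam r` is the Cauchy product of the Poisson(`lam`) pmf `e^{-lam} lam^i / i!` with the
geometric pmf `(1 - r) r^j`, because `r^y (lam / r)^i = lam^i r^(y - i)`, and a Cauchy product of
two sequences summing to `1` sums to `1`. The PoiTG pmf is the mixture of these pmfs for `r = q`
and `r = q²` with weights `1 - a` and `a`.
-/

open Finset

theorem HasSum.sum_range_mul {f g : ℕ → ℝ} {a b : ℝ} (hf : HasSum f a) (hg : HasSum g b) :
    HasSum (fun n ↦ ∑ k ∈ range (n + 1), f k * g (n - k)) (a * b) := by
  rw [← hf.tsum_eq, ← hg.tsum_eq]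
  exact hasSum_sum_range_mul_of_summable_norm (summable_norm_iff.mpr hf.summable)
    (summable_norm_iff.mpr hg.summable)

theorem hasSum_exp_neg_mul_pow_div_factorial (lam : ℝ) :
    HasSum (fun i : ℕ ↦ exp (-lam) * (lam ^ i / i.factorial)) 1 := by
  have := (NormedSpace.expSeries_div_hasSum_exp lam).mul_left (exp (-lam))
  rwa [← exp_eq_exp_ℝ, ← exp_add, neg_add_cancel, exp_zero] at this

theorem hasSum_one_sub_mul_pow {r : ℝ} (hr0 : 0 ≤ r) (hr1 : r < 1) :
    HasSum (fun j : ℕ ↦ (1 - r) * r ^ j) 1 := by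
  have := (hasSum_geometric_of_lt_one hr0 hr1).mul_left (1 - r)
  rwa [mul_inv_cancel₀ (sub_pos.mpr hr1).ne'] at this

noncomputable def poiGeomPmf (lam r : ℝ) (y : ℕ) : ℝ :=
  (1 - r) * r ^ y * exp (-lam) * ∑ i ∈ range (y + 1), (lam / r) ^ i / (i.factorial : ℝ)

theorem poiGeomPmf_eq_sum_range_mul {r : ℝ} (hr : r ≠ 0) (lam : ℝ) (y : ℕ) :
    poiGeomPmf lam r y =
      ∑ i ∈ range (y + 1), exp (-lam) * (lam ^ i / i.factorial) * ((1 - r) * r ^ (y - i)) := by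
  rw [poiGeomPmf, mul_sum]
  refine sum_congr rfl fun i hi ↦ ?_
  rw [← pow_mul_pow_sub r (Nat.lt_succ_iff.mp (mem_range.mp hi)), div_pow]
  field_simp

theorem poiGeomPmf_nonneg {lam r : ℝ} (hlam : 0 ≤ lam) (hr0 : 0 < r) (hr1 : r ≤ 1) (y : ℕ) :
    0 ≤ poiGeomPmf lam r y := by
  rw [poiGeomPmf_eq_sum_range_mul hr0.ne']
  have : 0 ≤ 1 - r := sub_nonneg.mpr hr1
  positivity

theorem hasSum_poiGeomPmf {r : ℝ} (lam : ℝ) (hr0 : 0 < r) (hr1 : r < 1) :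
    HasSum (poiGeomPmf lam r) 1 := by
  have := (hasSum_exp_neg_mul_pow_div_factorial lam).sum_range_mul
    (hasSum_one_sub_mul_pow hr0.le hr1)
  rw [one_mul] at this
  exact this.congr_fun (poiGeomPmf_eq_sum_range_mul hr0.ne' lam)

theorem poiTGPmf_eq_add (lam q a : ℝ) (y : ℕ) :
    poiTGPmf lam q a y = (1 - a) * poiGeomPmf lam q y + a * poiGeomPmf lam (q ^ 2) y := by
  rw [poiTGPmf, poiGeomPmf, poiGeomPmf, pow_mul]
  ring

theorem poiTG_pmf_valid (lam q a : ℝ) (hlam : 0 < lam) (hq0 : 0 < q) (hq1 : q < 1)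
    (ha0 : 0 < a) (ha1 : a < 1) :
    (∀ y : ℕ, 0 ≤ poiTGPmf lam q a y) ∧ (∑' y : ℕ, poiTGPmf lam q a y) = 1 := by
  have hq2_0 : 0 < q ^ 2 := by positivity
  have hq2_1 : q ^ 2 < 1 := pow_lt_one₀ hq0.le hq1 two_ne_zero
  refine ⟨fun y ↦ ?_, ?_⟩
  · rw [poiTGPmf_eq_add]
    have := poiGeomPmf_nonneg hlam.le hq0 hq1.le y
    have := poiGeomPmf_nonneg hlam.le hq2_0 hq2_1.le y
    have : 0 ≤ 1 - a := sub_nonneg.mpr ha1.le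
    positivity
  · have hmix := ((hasSum_poiGeomPmf lam hq0 hq1).mul_left (1 - a)).add
      ((hasSum_poiGeomPmf lam hq2_0 hq2_1).mul_left a)
    rw [(hmix.congr_fun (poiTGPmf_eq_add lam q a)).tsum_eq]
    ring
end

section
/- The variance of Y ~ PoiTG(λ, q, α) is Var(Y) = λ + q(1 - α + q(2 + q(1-α) - α²))/(1-q²)². -/
open scoped BigOperators
open Real Filter

/-
PoiTG(λ, q, α) is the convolution of Poisson(λ) with TGD(q, α), and TGD(q, α) is the mixture
(1 - α) Geom(q) + α Geom(q²) of geometric laws `(1 - r) r ^ n`. Centred second moments of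
probability sequences add under convolution, because the cross term is a product of two
vanishing centred first moments. So the variance is λ plus the variance of TGD, which follows
from the geometric moments `∑ n r ^ n` and `∑ n ^ 2 r ^ n`.
-/

open Finset Nat

theorem one_sub_ne_zero_of_norm_lt_one {𝕜 : Type*} [NormedDivisionRing 𝕜] {r : 𝕜}
    (hr : ‖r‖ < 1) : 1 - r ≠ 0 := by
  rw [sub_ne_zero]
  rintro rfl
  simp at hr

theorem norm_sq_lt_one {𝕜 : Type*} [NormedDivisionRing 𝕜] {r : 𝕜} (hr : ‖r‖ < 1) :
    ‖r ^ 2‖ < 1 := by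
  rw [norm_pow]
  exact pow_lt_one₀ (norm_nonneg r) hr two_ne_zero

theorem hasSum_sq_mul_geometric_of_norm_lt_one {𝕜 : Type*} [NormedField 𝕜]
    [CompleteSpace 𝕜] {r : 𝕜} (hr : ‖r‖ < 1) :
    HasSum (fun n : ℕ ↦ (n : 𝕜) ^ 2 * r ^ n) (r * (1 + r) / (1 - r) ^ 3) := by
  have hr1 := one_sub_ne_zero_of_norm_lt_one hr
  -- `n ^ 2 = 2 * (n + 2).choose 2 - 3 * n - 2`
  have h := ((hasSum_choose_mul_geometric_of_norm_lt_one 2 hr).mul_left 2).sub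
    ((hasSum_coe_mul_geometric_of_norm_lt_one hr).mul_left 3 |>.add
      ((hasSum_geometric_of_norm_lt_one hr).mul_left 2))
  rw [show r * (1 + r) / (1 - r) ^ 3
      = 2 * (1 / (1 - r) ^ (2 + 1)) - (3 * (r / (1 - r) ^ 2) + 2 * (1 - r)⁻¹) by
    field_simp; ring]
  refine h.congr_fun fun n ↦ ?_
  have hchoose : (n + 2).choose 2 * 2 = (n + 2) * (n + 1) := by
    simpa using (Nat.add_one_mul_choose_eq (n + 1) 1).symm
  have hchoose' := congrArg (Nat.cast : ℕ → 𝕜) hchoose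
  push_cast at hchoose'
  linear_combination (-1 : 𝕜) * r ^ n * hchoose'

theorem hasSum_sum_range_mul_of_hasSum {f g : ℕ → ℝ} {a b : ℝ} (hf : HasSum f a)
    (hg : HasSum g b) :
    HasSum (fun n : ℕ ↦ ∑ k ∈ range (n + 1), f k * g (n - k)) (a * b) := by
  rw [← hf.tsum_eq, ← hg.tsum_eq]
  exact hasSum_sum_range_mul_of_summable_norm (summable_norm_iff.mpr hf.summable)
    (summable_norm_iff.mpr hg.summable)

section Moments

variable {p r : ℕ → ℝ} {m m' s s' : ℝ}

theorem hasSum_sub_mul_of_hasSum_mul (hp : HasSum p 1)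
    (hm : HasSum (fun n : ℕ ↦ (n : ℝ) * p n) m) :
    HasSum (fun n : ℕ ↦ ((n : ℝ) - m) * p n) 0 := by
  simpa [sub_mul] using hm.sub (hp.mul_left m)

theorem hasSum_sq_sub_mul_of_hasSum_sq_mul (hp : HasSum p 1)
    (hm : HasSum (fun n : ℕ ↦ (n : ℝ) * p n) m)
    (hs : HasSum (fun n : ℕ ↦ (n : ℝ) ^ 2 * p n) s) :
    HasSum (fun n : ℕ ↦ ((n : ℝ) - m) ^ 2 * p n) (s - m ^ 2) := by
  have h := (hs.sub (hm.mul_left (2 * m))).add (hp.mul_left (m ^ 2))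
  rw [show s - m ^ 2 = s - 2 * m * m + m ^ 2 * 1 by ring]
  exact h.congr_fun fun n ↦ by ring

theorem hasSum_sq_sub_mul_sum_range_mul
    (hp : HasSum p 1) (hpm : HasSum (fun n : ℕ ↦ (n : ℝ) * p n) m)
    (hps : HasSum (fun n : ℕ ↦ (n : ℝ) ^ 2 * p n) s)
    (hr : HasSum r 1) (hrm : HasSum (fun n : ℕ ↦ (n : ℝ) * r n) m')
    (hrs : HasSum (fun n : ℕ ↦ (n : ℝ) ^ 2 * r n) s') :
    HasSum (fun n : ℕ ↦ ((n : ℝ) - (m + m')) ^ 2 * ∑ k ∈ range (n + 1), p k * r (n - k))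
      ((s - m ^ 2) + (s' - m' ^ 2)) := by
  have hp₁ := hasSum_sub_mul_of_hasSum_mul hp hpm
  have hp₂ := hasSum_sq_sub_mul_of_hasSum_sq_mul hp hpm hps
  have hr₁ := hasSum_sub_mul_of_hasSum_mul hr hrm
  have hr₂ := hasSum_sq_sub_mul_of_hasSum_sq_mul hr hrm hrs
  have h := ((hasSum_sum_range_mul_of_hasSum hp₂ hr).add
    (hasSum_sum_range_mul_of_hasSum (hp₁.mul_left 2) hr₁)).add
    (hasSum_sum_range_mul_of_hasSum hp hr₂)
  rw [show (s - m ^ 2) + (s' - m' ^ 2) = (s - m ^ 2) * 1 + 2 * 0 * 0 + 1 * (s' - m' ^ 2) by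
    ring]
  refine h.congr_fun fun n ↦ ?_
  simp only [mul_sum, ← sum_add_distrib]
  refine sum_congr rfl fun k hk ↦ ?_
  -- `n - (m + m') = (k - m) + ((n - k) - m')`
  rw [Nat.cast_sub (Nat.le_of_lt_succ (mem_range.mp hk))]
  ring

end Moments

noncomputable def poissonPmf (x : ℝ) (n : ℕ) : ℝ := exp (-x) * x ^ n / n !

theorem hasSum_poissonPmf (x : ℝ) : HasSum (poissonPmf x) 1 := by
  have h := (NormedSpace.expSeries_div_hasSum_exp x).mul_left (exp (-x))
  rw [← exp_eq_exp_ℝ, ← exp_add, neg_add_cancel, exp_zero] at h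
  exact h.congr_fun fun n ↦ mul_div_assoc ..

theorem succ_mul_poissonPmf_succ (x : ℝ) (n : ℕ) :
    ((n : ℝ) + 1) * poissonPmf x (n + 1) = x * poissonPmf x n := by
  simp only [poissonPmf, factorial_succ, cast_mul, cast_succ]
  field_simp
  ring

theorem hasSum_mul_poissonPmf (x : ℝ) :
    HasSum (fun n : ℕ ↦ (n : ℝ) * poissonPmf x n) x := by
  have h : HasSum (fun n : ℕ ↦ ((n + 1 : ℕ) : ℝ) * poissonPmf x (n + 1)) x := by
    have h' := (hasSum_poissonPmf x).mul_left x
    rw [mul_one] at h'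
    exact h'.congr_fun fun n ↦ by rw [cast_succ, succ_mul_poissonPmf_succ]
  simpa only [cast_zero, zero_mul, zero_add] using
    HasSum.zero_add (f := fun n : ℕ ↦ (n : ℝ) * poissonPmf x n) h

theorem hasSum_sq_mul_poissonPmf (x : ℝ) :
    HasSum (fun n : ℕ ↦ (n : ℝ) ^ 2 * poissonPmf x n) (x ^ 2 + x) := by
  have h :
      HasSum (fun n : ℕ ↦ ((n + 1 : ℕ) : ℝ) ^ 2 * poissonPmf x (n + 1)) (x ^ 2 + x) := by
    have h' := ((hasSum_mul_poissonPmf x).add (hasSum_poissonPmf x)).mul_left x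
    rw [show x ^ 2 + x = x * (x + 1) by ring]
    refine h'.congr_fun fun n ↦ ?_
    rw [cast_succ, sq, mul_assoc, succ_mul_poissonPmf_succ]
    ring
  simpa using HasSum.zero_add (f := fun n : ℕ ↦ (n : ℝ) ^ 2 * poissonPmf x n) h

noncomputable def geomPmf (r : ℝ) (n : ℕ) : ℝ := (1 - r) * r ^ n

section Geometric

variable {r : ℝ}

theorem hasSum_geomPmf (hr : ‖r‖ < 1) : HasSum (geomPmf r) 1 := by
  have hr1 := one_sub_ne_zero_of_norm_lt_one hr
  have h := (hasSum_geometric_of_norm_lt_one hr).mul_left (1 - r)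
  rw [mul_inv_cancel₀ hr1] at h
  exact h.congr_fun fun n ↦ rfl

theorem hasSum_mul_geomPmf (hr : ‖r‖ < 1) :
    HasSum (fun n : ℕ ↦ (n : ℝ) * geomPmf r n) (r / (1 - r)) := by
  have hr1 := one_sub_ne_zero_of_norm_lt_one hr
  have h := (hasSum_coe_mul_geometric_of_norm_lt_one hr).mul_left (1 - r)
  rw [show (1 - r) * (r / (1 - r) ^ 2) = r / (1 - r) by field_simp] at h
  exact h.congr_fun fun n ↦ by rw [geomPmf]; ring

theorem hasSum_sq_mul_geomPmf (hr : ‖r‖ < 1) :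
    HasSum (fun n : ℕ ↦ (n : ℝ) ^ 2 * geomPmf r n) (r * (1 + r) / (1 - r) ^ 2) := by
  have hr1 := one_sub_ne_zero_of_norm_lt_one hr
  have h := (hasSum_sq_mul_geometric_of_norm_lt_one hr).mul_left (1 - r)
  rw [show (1 - r) * (r * (1 + r) / (1 - r) ^ 3) = r * (1 + r) / (1 - r) ^ 2 by
    field_simp] at h
  exact h.congr_fun fun n ↦ by rw [geomPmf]; ring

end Geometric

theorem tgdPmf_eq_add_geomPmf (q a : ℝ) (n : ℕ) :
    tgdPmf q a n = (1 - a) * geomPmf q n + a * geomPmf (q ^ 2) n := by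
  rw [tgdPmf, geomPmf, geomPmf, pow_mul]
  ring

section TGD

variable {q : ℝ} (a : ℝ)

theorem HasSum.mul_tgdPmf {f : ℕ → ℝ} {A B : ℝ}
    (hA : HasSum (fun n ↦ f n * geomPmf q n) A)
    (hB : HasSum (fun n ↦ f n * geomPmf (q ^ 2) n) B) :
    HasSum (fun n ↦ f n * tgdPmf q a n) ((1 - a) * A + a * B) :=
  ((hA.mul_left (1 - a)).add (hB.mul_left a)).congr_fun fun n ↦ by
    rw [tgdPmf_eq_add_geomPmf]; ring

theorem hasSum_tgdPmf (hq : ‖q‖ < 1) : HasSum (tgdPmf q a) 1 := by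
  have h := HasSum.mul_tgdPmf a (f := fun _ ↦ 1)
    (by simpa using hasSum_geomPmf hq) (by simpa using hasSum_geomPmf (norm_sq_lt_one hq))
  simpa using h

theorem hasSum_mul_tgdPmf (hq : ‖q‖ < 1) :
    HasSum (fun n : ℕ ↦ (n : ℝ) * tgdPmf q a n) ((q * (1 - a) + q ^ 2) / (1 - q ^ 2)) := by
  convert HasSum.mul_tgdPmf a (hasSum_mul_geomPmf hq) (hasSum_mul_geomPmf (norm_sq_lt_one hq))
    using 1
  have h1 := one_sub_ne_zero_of_norm_lt_one hq
  have h2 := one_sub_ne_zero_of_norm_lt_one (norm_sq_lt_one hq)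
  rw [div_eq_iff h2]
  field_simp
  ring

theorem hasSum_sq_mul_tgdPmf (hq : ‖q‖ < 1) :
    HasSum (fun n : ℕ ↦ (n : ℝ) ^ 2 * tgdPmf q a n)
      ((1 - a) * (q * (1 + q) / (1 - q) ^ 2) + a * (q ^ 2 * (1 + q ^ 2) / (1 - q ^ 2) ^ 2)) :=
  HasSum.mul_tgdPmf a (hasSum_sq_mul_geomPmf hq) (hasSum_sq_mul_geomPmf (norm_sq_lt_one hq))

end TGD

theorem poiTGPmf_eq_sum_range (lam : ℝ) {q : ℝ} (hq : q ≠ 0) (a : ℝ) (n : ℕ) :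
    poiTGPmf lam q a n = ∑ k ∈ range (n + 1), poissonPmf lam k * tgdPmf q a (n - k) := by
  simp only [poiTGPmf, poissonPmf, tgdPmf, mul_sum, ← sum_add_distrib]
  refine sum_congr rfl fun k hk ↦ ?_
  have hkn : k + (n - k) = n := Nat.add_sub_cancel' (Nat.le_of_lt_succ (mem_range.mp hk))
  have hq₁ : q ^ n = q ^ k * q ^ (n - k) := by rw [← pow_add, hkn]
  have hq₂ : q ^ (2 * n) = (q ^ 2) ^ k * q ^ (2 * (n - k)) := by
    rw [← pow_mul, ← pow_add, ← mul_add, hkn]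
  rw [div_pow, div_pow, hq₁, hq₂]
  field_simp

theorem poiTG_variance_general (lam q a : ℝ) (hq0 : 0 < q) (hq1 : q < 1) :
    (∑' y : ℕ, ((y : ℝ) - (lam + (q * (1 - a) + q ^ 2) / (1 - q ^ 2))) ^ 2 *
        poiTGPmf lam q a y) =
      lam + q * (1 - a + q * (2 + q * (1 - a) - a ^ 2)) / (1 - q ^ 2) ^ 2 := by
  have hq : ‖q‖ < 1 := by rwa [Real.norm_of_nonneg hq0.le]
  have h := hasSum_sq_sub_mul_sum_range_mul (hasSum_poissonPmf lam) (hasSum_mul_poissonPmf lam)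
    (hasSum_sq_mul_poissonPmf lam) (hasSum_tgdPmf a hq) (hasSum_mul_tgdPmf a hq)
    (hasSum_sq_mul_tgdPmf a hq)
  simp_rw [poiTGPmf_eq_sum_range lam hq0.ne', h.tsum_eq]
  have h1 := one_sub_ne_zero_of_norm_lt_one hq
  have h2 := one_sub_ne_zero_of_norm_lt_one (norm_sq_lt_one hq)
  field_simp
  ring

theorem poiTG_variance (lam q a : ℝ) (hlam : 0 < lam) (hq0 : 0 < q) (hq1 : q < 1)
    (ha0 : 0 < a) (ha1 : a < 1) :
    (∑' y : ℕ, ((y : ℝ) - (lam + (q * (1 - a) + q ^ 2) / (1 - q ^ 2))) ^ 2 *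
        poiTGPmf lam q a y) =
      lam + q * (1 - a + q * (2 + q * (1 - a) - a ^ 2)) / (1 - q ^ 2) ^ 2 :=
  poiTG_variance_general lam q a hq0 hq1
end

section
/- The PoiTG(λ, q, α) distribution is over-dispersed for 0 < α < 1: its variance strictly exceeds its mean, i.e., λ + q(1-α+q(2+q(1-α)-α²))/(1-q²)² > λ + (q(1-α)+q²)/(1-q²). -/
theorem poiTG_overdispersed (lam q a : ℝ) (hlam : 0 < lam) (hq0 : 0 < q) (hq1 : q < 1)
    (ha0 : 0 < a) (ha1 : a < 1) :
    lam + q * (1 - a + q * (2 + q * (1 - a) - a ^ 2)) / (1 - q ^ 2) ^ 2 >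
      lam + (q * (1 - a) + q ^ 2) / (1 - q ^ 2) := by
  have hq2 : (0:ℝ) < 1 - q ^ 2 := by nlinarith
  rw [gt_iff_lt, add_lt_add_iff_left, div_lt_div_iff₀ hq2 (by positivity)]
  have h : 0 < q * (1 + 2*q*(1-a) - a^2 + q^2) * (1 - q^2) := by
    apply mul_pos (mul_pos hq0 (by nlinarith)) hq2
  nlinarith [h]
end
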